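/- Let V be a finite-dimensional real vector space. The space A(V) of algebraic curvature tensors on V equals the linear span of the set {γ(S) : S a symmetric bilinear form on V}, where γ(S)(w,x,y,z) := S(w,z)S(x,y) − S(w,y)S(x,z). -/

import Mathlib

/-!
The generators `γ(S)` satisfy the curvature identities by a direct computation. Conversely, fix
a basis `e` of `V` and pair 4-tensors by `⟪S, T⟫ = ∑_f S(e_f) T(e_f)`, which is positive definite,
so every 4-tensor splits into a part in the span of the `γ(S)` plus a part orthogonal to it.
Polarizing `γ` at the rank-one forms `S_u = u♭ ⊗ u♭` gives
`⟪γ(S_u + S_v) - γ(S_u) - γ(S_v), T⟫ = T(u,v,v,u) + T(v,u,u,v) - T(u,v,u,v) - T(v,u,v,u)`,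
which is `4 T(u,v,v,u)` for an algebraic curvature tensor `T`. So an algebraic curvature tensor
orthogonal to all `γ(S)` has vanishing sectional values, and polarization shows it is zero.
-/

open Module

namespace CurvatureTensor

section CommRing

variable (R M : Type*) [CommRing R] [AddCommGroup M] [Module R M]

def curvatureTensors : Submodule R (MultilinearMap R (fun _ : Fin 4 => M) R) where
  carrier := {T | (∀ w x y z : M, T ![w, x, y, z] = - T ![w, x, z, y]) ∧
      (∀ w x y z : M, T ![w, x, y, z] = T ![y, z, w, x]) ∧
      (∀ w x y z : M, T ![w, x, y, z] + T ![w, y, z, x] + T ![w, z, x, y] = 0)}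
  add_mem' := by
    rintro T T' ⟨h₁, h₂, h₃⟩ ⟨h₁', h₂', h₃'⟩
    refine ⟨fun w x y z => ?_, fun w x y z => ?_, fun w x y z => ?_⟩ <;>
      simp only [add_apply]
    · linear_combination h₁ w x y z + h₁' w x y z
    · linear_combination h₂ w x y z + h₂' w x y z
    · linear_combination h₃ w x y z + h₃' w x y z
  zero_mem' := by simp
  smul_mem' := by
    rintro c T ⟨h₁, h₂, h₃⟩
    refine ⟨fun w x y z => ?_, fun w x y z => ?_, fun w x y z => ?_⟩ <;>
      simp only [smul_apply, smul_eq_mul]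
    · linear_combination c * h₁ w x y z
    · linear_combination c * h₂ w x y z
    · linear_combination c * h₃ w x y z

def gammaTensors : Set (MultilinearMap R (fun _ : Fin 4 => M) R) :=
  {T | ∃ S : M →ₗ[R] M →ₗ[R] R, (∀ x y : M, S x y = S y x) ∧
    ∀ w x y z : M, T ![w, x, y, z] = S w z * S x y - S w y * S x z}

variable {R M}

def gammaTensor (S : M →ₗ[R] M →ₗ[R] R) : MultilinearMap R (fun _ : Fin 4 => M) R where
  toFun m := S (m 0) (m 3) * S (m 1) (m 2) - S (m 0) (m 2) * S (m 1) (m 3)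
  map_update_add' := by
    intro _ m i x y
    obtain rfl : ‹DecidableEq (Fin 4)› = instDecidableEqFin 4 := Subsingleton.elim _ _
    fin_cases i <;> simp <;> ring
  map_update_smul' := by
    intro _ m i c x
    obtain rfl : ‹DecidableEq (Fin 4)› = instDecidableEqFin 4 := Subsingleton.elim _ _
    fin_cases i <;> simp <;> ring

theorem gammaTensor_apply (S : M →ₗ[R] M →ₗ[R] R) (m : Fin 4 → M) :
    gammaTensor S m = S (m 0) (m 3) * S (m 1) (m 2) - S (m 0) (m 2) * S (m 1) (m 3) :=
  rfl

theorem gammaTensor_mem_gammaTensors {S : M →ₗ[R] M →ₗ[R] R} (hS : ∀ x y, S x y = S y x) :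
    gammaTensor S ∈ gammaTensors R M :=
  ⟨S, hS, fun _ _ _ _ => rfl⟩

theorem gammaTensors_subset_curvatureTensors : gammaTensors R M ⊆ curvatureTensors R M := by
  rintro T ⟨S, hS, hT⟩
  refine ⟨fun w x y z => ?_, fun w x y z => ?_, fun w x y z => ?_⟩
  · rw [hT, hT]; ring
  · rw [hT, hT, hS y x, hS z w, hS y w, hS z x]; ring
  · rw [hT, hT, hT, hS y x, hS z x, hS z y]; ring

def prodDual {ι : Type*} [Fintype ι] (φ : ι → Dual R M) : MultilinearMap R (fun _ : ι => M) R :=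
  (MultilinearMap.mkPiAlgebra R ι R).compLinearMap φ

theorem prodDual_apply {ι : Type*} [Fintype ι] (φ : ι → Dual R M) (m : ι → M) :
    prodDual φ m = ∏ i, φ i (m i) :=
  rfl

open LinearMap.BilinForm in
theorem gammaTensor_linMulLin_add (L : M → Dual R M) (u v : M) :
    gammaTensor (linMulLin (L u) (L u) + linMulLin (L v) (L v)) -
        gammaTensor (linMulLin (L u) (L u)) - gammaTensor (linMulLin (L v) (L v)) =
      prodDual (L ∘ ![u, v, v, u]) + prodDual (L ∘ ![v, u, u, v]) -
        prodDual (L ∘ ![u, v, u, v]) - prodDual (L ∘ ![v, u, v, u]) := by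
  ext m
  simp [gammaTensor_apply, prodDual_apply, Fin.prod_univ_four, linMulLin_apply]
  ring

section Slots

variable (T : MultilinearMap R (fun _ : Fin 4 => M) R)

theorem map_add_slot0 (a a' b c d : M) :
    T ![a + a', b, c, d] = T ![a, b, c, d] + T ![a', b, c, d] :=
  T.cons_add _ _ _

theorem map_add_slot1 (a b b' c d : M) :
    T ![a, b + b', c, d] = T ![a, b, c, d] + T ![a, b', c, d] := by
  convert T.map_update_add ![a, b, c, d] 1 b b' using 3 <;> funext i <;> fin_cases i <;> rfl

theorem map_add_slot2 (a b c c' d : M) :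
    T ![a, b, c + c', d] = T ![a, b, c, d] + T ![a, b, c', d] := by
  convert T.map_update_add ![a, b, c, d] 2 c c' using 3 <;> funext i <;> fin_cases i <;> rfl

theorem map_add_slot3 (a b c d d' : M) :
    T ![a, b, c, d + d'] = T ![a, b, c, d] + T ![a, b, c, d'] := by
  convert T.map_update_add ![a, b, c, d] 3 d d' using 3 <;> funext i <;> fin_cases i <;> rfl

end Slots

section Pairing

variable {κ ι : Type*} [Fintype κ] [DecidableEq κ] [Fintype ι] (b : Basis ι R M)

theorem map_eq_sum_prod_repr (T : MultilinearMap R (fun _ : κ => M) R) (m : κ → M) :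
    T m = ∑ f : κ → ι, (∏ i, b.repr (m i) (f i)) * T (fun i => b (f i)) := by
  conv_lhs => rw [← funext fun i => b.sum_repr (m i)]
  rw [T.map_sum]
  simp only [T.map_smul_univ, smul_eq_mul]

noncomputable def basisPairing : LinearMap.BilinForm R (MultilinearMap R (fun _ : κ => M) R) :=
  LinearMap.mk₂ R (fun S T => ∑ f : κ → ι, S (fun i => b (f i)) * T (fun i => b (f i)))
    (fun _ _ _ => by simp only [add_apply, add_mul, Finset.sum_add_distrib])
    (fun _ _ _ => by simp only [smul_apply, smul_eq_mul, Finset.mul_sum, mul_assoc])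
    (fun _ _ _ => by simp only [add_apply, mul_add, Finset.sum_add_distrib])
    (fun _ _ _ => by simp only [smul_apply, smul_eq_mul, Finset.mul_sum, mul_left_comm])

theorem basisPairing_apply (S T : MultilinearMap R (fun _ : κ => M) R) :
    basisPairing b S T = ∑ f : κ → ι, S (fun i => b (f i)) * T (fun i => b (f i)) :=
  rfl

theorem basisPairing_comm (S T : MultilinearMap R (fun _ : κ => M) R) :
    basisPairing b S T = basisPairing b T S := by
  simp only [basisPairing_apply, mul_comm]

theorem basisPairing_prodDual_toDual [DecidableEq ι] (v : κ → M)
    (T : MultilinearMap R (fun _ : κ => M) R) :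
    basisPairing b (prodDual (b.toDual ∘ v)) T = T v := by
  simp only [basisPairing_apply, prodDual_apply, Function.comp_apply, Basis.toDual_apply_left,
    map_eq_sum_prod_repr b T v]

end Pairing

end CommRing

section OrderedField

variable {𝕜 M : Type*} [Field 𝕜] [LinearOrder 𝕜] [IsStrictOrderedRing 𝕜]
  [AddCommGroup M] [Module 𝕜 M]

theorem eq_zero_of_forall_sectional_eq_zero {T : MultilinearMap 𝕜 (fun _ : Fin 4 => M) 𝕜}
    (hT : T ∈ curvatureTensors 𝕜 M) (hsec : ∀ u v : M, T ![u, v, v, u] = 0) : T = 0 := by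
  obtain ⟨h₁, h₂, h₃⟩ := hT
  have antisymm₀₁ : ∀ w x y z : M, T ![w, x, y, z] = - T ![x, w, y, z] := fun w x y z => by
    rw [h₂, h₁, h₂]
  -- polarizing `hsec` in `u`, then in `v`
  have hpol₀₃ : ∀ u v w : M, T ![u, v, v, w] = 0 := fun u v w => by
    have h := hsec (u + w) v
    have hsymm : T ![w, v, v, u] = T ![u, v, v, w] := by
      rw [h₂, h₁, antisymm₀₁, neg_neg]
    rw [map_add_slot0, map_add_slot3, map_add_slot3, hsec, hsec, hsymm] at h
    linarith
  have antisymm₁₂ : ∀ u v x w : M, T ![u, v, x, w] = - T ![u, x, v, w] := fun u v x w => by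
    have h := hpol₀₃ u (v + x) w
    rw [map_add_slot1, map_add_slot2, map_add_slot2, hpol₀₃, hpol₀₃] at h
    linarith
  -- `T` is alternating in its last three slots, so the Bianchi identity reads `3 T = 0`
  have hzero : ∀ u v x w : M, T ![u, v, x, w] = 0 := fun u v x w => by
    have h := h₃ u v x w
    rw [antisymm₁₂ u x w, h₁ u w x, antisymm₁₂ u w v, h₁ u v w] at h
    linarith
  ext m
  rw [← FinVec.etaExpand_eq m]
  exact hzero _ _ _ _

section Pairing

variable {κ ι : Type*} [Fintype κ] [DecidableEq κ] [Fintype ι] (b : Basis ι 𝕜 M)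

theorem eq_zero_of_basisPairing_self_eq_zero {T : MultilinearMap 𝕜 (fun _ : κ => M) 𝕜}
    (h : basisPairing b T T = 0) : T = 0 := by
  rw [basisPairing_apply, Finset.sum_eq_zero_iff_of_nonneg fun f _ => mul_self_nonneg _] at h
  exact Basis.ext_multilinear (fun _ => b) fun f => by simpa using h f (Finset.mem_univ f)

theorem isCompl_orthogonal_basisPairing [FiniteDimensional 𝕜 M]
    (p : Submodule 𝕜 (MultilinearMap 𝕜 (fun _ : κ => M) 𝕜)) :
    IsCompl p ((basisPairing b).orthogonal p) := by
  refine (LinearMap.BilinForm.isCompl_orthogonal_iff_disjoint fun S T h => ?_).mpr ?_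
  · rwa [basisPairing_comm]
  · exact Submodule.disjoint_def.mpr fun T hT hT' =>
      eq_zero_of_basisPairing_self_eq_zero b (hT' T hT)

open LinearMap.BilinForm in
theorem eq_zero_of_mem_orthogonal_span_gammaTensors [DecidableEq ι]
    {T : MultilinearMap 𝕜 (fun _ : Fin 4 => M) 𝕜} (hT : T ∈ curvatureTensors 𝕜 M)
    (hperp : T ∈ (basisPairing b).orthogonal (Submodule.span 𝕜 (gammaTensors 𝕜 M))) :
    T = 0 := by
  refine eq_zero_of_forall_sectional_eq_zero hT fun u v => ?_
  obtain ⟨h₁, h₂, -⟩ := hT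
  have hmem : ∀ S : M →ₗ[𝕜] M →ₗ[𝕜] 𝕜, (∀ x y, S x y = S y x) →
      gammaTensor S ∈ Submodule.span 𝕜 (gammaTensors 𝕜 M) := fun S hS =>
    Submodule.subset_span (gammaTensor_mem_gammaTensors hS)
  have hsymm : ∀ w x y : M, linMulLin (b.toDual w) (b.toDual w) x y =
      linMulLin (b.toDual w) (b.toDual w) y x := fun _ _ _ => mul_comm _ _
  have hpol := hperp _ (Submodule.sub_mem _ (Submodule.sub_mem _
    (hmem (linMulLin (b.toDual u) (b.toDual u) + linMulLin (b.toDual v) (b.toDual v))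
      fun x y => by simp only [LinearMap.add_apply, hsymm u x y, hsymm v x y])
    (hmem _ (hsymm u))) (hmem _ (hsymm v)))
  rw [gammaTensor_linMulLin_add] at hpol
  simp only [map_add, map_sub, LinearMap.add_apply, LinearMap.sub_apply,
    basisPairing_prodDual_toDual] at hpol
  linarith [h₂ v u u v, h₁ u v v u, h₁ v u u v]

theorem span_gammaTensors [FiniteDimensional 𝕜 M] :
    Submodule.span 𝕜 (gammaTensors 𝕜 M) = curvatureTensors 𝕜 M := by
  have hle := Submodule.span_le.mpr (gammaTensors_subset_curvatureTensors (R := 𝕜) (M := M))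
  refine le_antisymm hle fun T hT => ?_
  let b := Module.finBasis 𝕜 M
  obtain ⟨S, hS, T', hT', rfl⟩ := Submodule.mem_sup.mp
    ((isCompl_orthogonal_basisPairing (κ := Fin 4) b _).sup_eq_top ▸ Submodule.mem_top (x := T))
  have hT'A : T' ∈ curvatureTensors 𝕜 M := by
    simpa using (curvatureTensors 𝕜 M).sub_mem hT (hle hS)
  rw [eq_zero_of_mem_orthogonal_span_gammaTensors b hT'A hT', add_zero]
  exact hS

end Pairing

end OrderedField

end CurvatureTensor

open CurvatureTensor in
theorem stmt_0 (V : Type) [AddCommGroup V] [Module ℝ V] [FiniteDimensional ℝ V] :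
    {R : MultilinearMap ℝ (fun _ : Fin 4 => V) ℝ |
      (∀ w x y z : V, R ![w, x, y, z] = - R ![w, x, z, y]) ∧
      (∀ w x y z : V, R ![w, x, y, z] = R ![y, z, w, x]) ∧
      (∀ w x y z : V, R ![w, x, y, z] + R ![w, y, z, x] + R ![w, z, x, y] = 0)} =
    ↑(Submodule.span ℝ {T : MultilinearMap ℝ (fun _ : Fin 4 => V) ℝ |
      ∃ S : V →ₗ[ℝ] V →ₗ[ℝ] ℝ, (∀ x y : V, S x y = S y x) ∧
        ∀ w x y z : V, T ![w, x, y, z] = S w z * S x y - S w y * S x z}) :=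
  congrArg SetLike.coe (span_gammaTensors (𝕜 := ℝ) (M := V)).symm
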